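/- arXiv:0704.3249 — 2 statements merged into one kernel-verified Lean document; each statement's English description precedes it below -/
import Mathlib

section
/- Let R > 0 and α ∈ ℝ with α ≥ −1/(4πR). Then the equation α + t/(4π) + (1/(4π))·2t/(e^{2tR} − 1) = 0 has no solution t > 0. -/
open Real

private lemma aux_deriv1 : StrictMonoOn (fun s : ℝ => (s - 1) * Real.exp s + 1) (Set.Ici 0) := by
  apply strictMonoOn_of_deriv_pos (convex_Ici 0)
  · fun_prop
  · intro x hx
    rw [interior_Ici] at hx
    have h : HasDerivAt (fun s : ℝ => (s - 1) * Real.exp s + 1)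
        (1 * Real.exp x + (x - 1) * Real.exp x) x :=
      (((hasDerivAt_id x).sub_const 1).mul (Real.hasDerivAt_exp x)).add_const 1
    rw [h.deriv]
    have := Real.exp_pos x
    nlinarith [hx.out]

private lemma aux_deriv2 : StrictMonoOn (fun s : ℝ => (s - 2) * Real.exp s + s + 2) (Set.Ici 0) := by
  apply strictMonoOn_of_deriv_pos (convex_Ici 0)
  · fun_prop
  · intro x hx
    rw [interior_Ici] at hx
    have h : HasDerivAt (fun s : ℝ => (s - 2) * Real.exp s + s + 2)
        (1 * Real.exp x + (x - 2) * Real.exp x + 1) x :=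
      ((((hasDerivAt_id x).sub_const 2).mul (Real.hasDerivAt_exp x)).add
        (hasDerivAt_id x)).add_const 2
    rw [h.deriv]
    have h1 := aux_deriv1 (Set.self_mem_Ici) (le_of_lt hx.out) hx.out
    simp only [Real.exp_zero] at h1
    nlinarith

private lemma aux_key {s : ℝ} (hs : 0 < s) : 0 < (s - 2) * Real.exp s + s + 2 := by
  have h := aux_deriv2 (Set.self_mem_Ici) (le_of_lt hs) hs
  simpa [Real.exp_zero] using h

/-- If `α ≥ -1/(4πR)` then the negative-eigenvalue equation
`α + t/(4π) + (1/(4π))·2t/(e^{2tR} - 1) = 0` has no solution `t > 0`. -/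
theorem stmt5 (R α : ℝ) (hR : 0 < R) (hα : -1 / (4 * π * R) ≤ α) :
    ¬ ∃ t : ℝ, 0 < t ∧
      α + t / (4 * π) + (1 / (4 * π)) * (2 * t / (Real.exp (2 * t * R) - 1)) = 0 := by
  rintro ⟨t, ht, heq⟩
  have hpi := Real.pi_pos
  have hs : 0 < 2 * t * R := by positivity
  set E := Real.exp (2 * t * R) with hEdef
  have hE : 1 < E := by
    rw [hEdef, ← Real.exp_zero]
    exact Real.exp_lt_exp.mpr hs
  have hkey : 0 < (2 * t * R - 2) * E + 2 * t * R + 2 := aux_key hs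
  have hEm : 0 < E - 1 := by linarith
  have expand : t / (4 * π) + (1 / (4 * π)) * (2 * t / (E - 1)) - 1 / (4 * π * R) =
      ((2 * t * R - 2) * E + 2 * t * R + 2) / (8 * π * R * (E - 1)) := by
    field_simp
    ring
  have h1 : 0 < t / (4 * π) + (1 / (4 * π)) * (2 * t / (E - 1)) - 1 / (4 * π * R) := by
    rw [expand]
    positivity
  have h2 : -1 / (4 * π * R) = -(1 / (4 * π * R)) := by ring
  linarith [heq, hα, h1]
end

section
/- Let R > 0 and α < −1/(4πR). Then there exists exactly one t > 0 satisfying α + t/(4π) + (1/(4π))·2t/(e^{2tR} − 1) = 0. -/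
open Real

private noncomputable def phi6 (x : ℝ) : ℝ := x * (Real.exp x + 1) / (Real.exp x - 1)

private lemma exp_sub_one_pos6 {x : ℝ} (hx : 0 < x) : 0 < Real.exp x - 1 := by
  linarith [Real.add_one_lt_exp (ne_of_gt hx)]

private lemma phi6_hasDerivAt {x : ℝ} (hx : 0 < x) :
    HasDerivAt phi6
      (((Real.exp x + 1 + x * Real.exp x) * (Real.exp x - 1)
        - x * (Real.exp x + 1) * Real.exp x) / (Real.exp x - 1) ^ 2) x := by
  have hne : Real.exp x - 1 ≠ 0 := ne_of_gt (exp_sub_one_pos6 hx)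
  have h1 : HasDerivAt (fun x : ℝ => x * (Real.exp x + 1))
      (1 * (Real.exp x + 1) + x * Real.exp x) x :=
    (hasDerivAt_id x).mul ((Real.hasDerivAt_exp x).add_const 1)
  have h2 : HasDerivAt (fun x : ℝ => Real.exp x - 1) (Real.exp x) x :=
    (Real.hasDerivAt_exp x).sub_const 1
  have := h1.div h2 hne
  refine this.congr_deriv ?_
  ring

private lemma phi6_deriv_pos {x : ℝ} (hx : 0 < x) :
    0 < ((Real.exp x + 1 + x * Real.exp x) * (Real.exp x - 1)
        - x * (Real.exp x + 1) * Real.exp x) / (Real.exp x - 1) ^ 2 := by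
  have hne : 0 < Real.exp x - 1 := exp_sub_one_pos6 hx
  apply div_pos _ (by positivity)
  have hs : x < Real.sinh x := Real.self_lt_sinh_iff.mpr hx
  have hsinh : Real.sinh x = (Real.exp x - Real.exp (-x)) / 2 := Real.sinh_eq x
  have hpos := Real.exp_pos x
  have h1 : Real.exp (-x) * Real.exp x = 1 := by
    rw [← Real.exp_add]; simp
  rw [hsinh] at hs
  nlinarith [mul_lt_mul_of_pos_right hs hpos, h1]

private lemma phi6_strictMono : StrictMonoOn phi6 (Set.Ioi 0) := by
  have : ∀ x ∈ interior (Set.Ioi (0:ℝ)), 0 < deriv phi6 x := by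
    rw [interior_Ioi]
    intro x hx
    rw [(phi6_hasDerivAt hx).deriv]
    exact phi6_deriv_pos hx
  exact strictMonoOn_of_deriv_pos (convex_Ioi 0)
    (fun x hx => ((phi6_hasDerivAt hx).continuousAt.continuousWithinAt)) this

private lemma phi6_lt {x : ℝ} (hx : 0 < x) : phi6 x < 2 + x := by
  have hne : 0 < Real.exp x - 1 := exp_sub_one_pos6 hx
  rw [phi6, div_lt_iff₀ hne]
  have := Real.add_one_lt_exp (ne_of_gt hx)
  nlinarith

private lemma lt_phi6 {x : ℝ} (hx : 0 < x) : x < phi6 x := by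
  have hne : 0 < Real.exp x - 1 := exp_sub_one_pos6 hx
  rw [phi6, lt_div_iff₀ hne]
  nlinarith

private lemma phi6_continuousOn : ContinuousOn phi6 (Set.Ioi 0) := fun x hx =>
  (phi6_hasDerivAt hx).continuousAt.continuousWithinAt

/-- If `α < -1/(4πR)` then there is exactly one `t > 0` with
`α + t/(4π) + (1/(4π))·2t/(e^{2tR} - 1) = 0`. -/
theorem stmt6 (R α : ℝ) (hR : 0 < R) (hα : α < -1 / (4 * π * R)) :
    ∃! t : ℝ, 0 < t ∧
      α + t / (4 * π) + (1 / (4 * π)) * (2 * t / (Real.exp (2 * t * R) - 1)) = 0 := by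
  have hπ : 0 < π := Real.pi_pos
  set c : ℝ := -(8 * π * R * α) with hc_def
  have hc : 2 < c := by
    have h4 : 0 < 4 * π * R := by positivity
    rw [lt_div_iff₀ h4] at hα
    nlinarith
  have hπne : (4 : ℝ) * π ≠ 0 := by positivity
  have hRne : (2 : ℝ) * R ≠ 0 := by positivity
  -- iff: for t > 0, equation ↔ phi6 (2*t*R) = c
  have hiff : ∀ t : ℝ, 0 < t →
      (α + t / (4 * π) + (1 / (4 * π)) * (2 * t / (Real.exp (2 * t * R) - 1)) = 0
        ↔ phi6 (2 * t * R) = c) := by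
    intro t ht
    have hx : 0 < 2 * t * R := by positivity
    have hne : 0 < Real.exp (2 * t * R) - 1 := exp_sub_one_pos6 hx
    rw [phi6, div_eq_iff (ne_of_gt hne), hc_def]
    constructor
    · intro h
      have hne2 : Real.exp (t*2*R) - 1 ≠ 0 := by rw [show t*2*R = 2*t*R by ring]; exact ne_of_gt hne
      field_simp at h
      rw [show t*2*R = 2*t*R by ring] at h
      have h2 : (4*π) * (α*(4*π)*(Real.exp (2*t*R)-1) + t*(Real.exp (2*t*R)-1) + 2*t)
          = (4*π) * 0 := by linear_combination (4*π) * h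
      have key := mul_left_cancel₀ hπne h2
      linear_combination (2*R) * key
    · intro h
      have h2 : (2*R) * (t * (Real.exp (2*t*R) + 1))
          = (2*R) * (-(4*π*α) * (Real.exp (2*t*R) - 1)) := by linear_combination h
      have key := mul_left_cancel₀ hRne h2
      have hne2 : Real.exp (t*2*R) - 1 ≠ 0 := by rw [show t*2*R = 2*t*R by ring]; exact ne_of_gt hne
      field_simp
      rw [show t*2*R = 2*t*R by ring]
      linear_combination key
  -- existence of x
  set a : ℝ := (c - 2) / 2 with ha_def
  have ha : 0 < a := by rw [ha_def]; linarith
  have hac : a ≤ c := by rw [ha_def]; linarith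
  have hcont : ContinuousOn phi6 (Set.Icc a c) :=
    phi6_continuousOn.mono (fun y hy => lt_of_lt_of_le ha hy.1)
  have hlow : phi6 a < c := by
    have := phi6_lt ha
    rw [ha_def] at this ⊢
    linarith
  have hhigh : c < phi6 c := lt_phi6 (by linarith)
  obtain ⟨x, hxmem, hxeq⟩ := intermediate_value_Icc hac hcont ⟨le_of_lt hlow, le_of_lt hhigh⟩
  have hx0 : 0 < x := lt_of_lt_of_le ha hxmem.1
  refine ⟨x / (2 * R), ⟨by positivity, ?_⟩, ?_⟩
  · rw [hiff _ (by positivity)]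
    have hxr : 2 * (x / (2 * R)) * R = x := by field_simp
    rw [hxr, hxeq]
  · rintro t ⟨ht, heq⟩
    rw [hiff t ht] at heq
    have h2t : (2 * t * R) ∈ Set.Ioi (0:ℝ) := by simp only [Set.mem_Ioi]; positivity
    have hxm : x ∈ Set.Ioi (0:ℝ) := hx0
    have hx' : 2 * t * R = x := phi6_strictMono.injOn h2t hxm (by rw [heq, hxeq])
    rw [eq_div_iff hRne]
    linear_combination hx'
end
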